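/- Type preservation for expression reduction: if ⊢ e : t in the empty environment and e reduces in one step to e' by the expression reduction relation, then ⊢ e' : t. -/
import Mathlib


set_option autoImplicit false

/-! ## Basic domains of the execution model -/

abbrev Puk := ℕ   -- public keys
abbrev Pak := ℕ   -- private keys
abbrev Puh := ℕ   -- public hashes of contracts
abbrev Oph := ℕ   -- operation hashes
abbrev Tz := ℕ    -- token amounts
abbrev Time := ℕ  -- time stamps
abbrev Code := ℕ  -- contract scripts (treated as black boxes)

/-- Status of an operation in the pool. -/
inductive Status where
  | pending
  | included (t : Time)
  | timeout
  deriving DecidableEq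

/-- A counter: a natural-number value `n` together with a boolean flag `b`. -/
structure Counter where
  n : ℕ
  b : Bool
  deriving DecidableEq

/-- Operations: simple transfers to implicit accounts, contract invocations
(transfers to a public hash together with a serialized argument), and
contract originations. -/
inductive Op where
  | transferK (nt : Tz) (sender : Puk) (dst : Puk) (fee : Tz)
  | transferH (nt : Tz) (sender : Puk) (dst : Puh) (arg : String) (fee : Tz)
  | originate (nt : Tz) (sender : Puk) (code : Code) (init : String) (fee : Tz)
  deriving DecidableEq

/-- The sender (public key) of an operation. -/
def Op.sender : Op → Puk
  | .transferK _ s _ _ => s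
  | .transferH _ s _ _ _ => s
  | .originate _ s _ _ _ => s

/-- The amount of tokens transferred by an operation. -/
def Op.amount : Op → Tz
  | .transferK nt _ _ _ => nt
  | .transferH nt _ _ _ _ => nt
  | .originate nt _ _ _ _ => nt

/-- The fee of an operation. -/
def Op.opFee : Op → Tz
  | .transferK _ _ _ fee => fee
  | .transferH _ _ _ _ fee => fee
  | .originate _ _ _ _ fee => fee

/-- A contractor manages a single smart contract: its code, the time it was
accepted, its balance and its storage (a serialized value). -/
structure Contractor where
  code : Code
  time : Time
  bal : Tz
  storage : String

abbrev Pool := Oph → Option (Op × Time × Status)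
abbrev Managers := Puk → Option (Tz × Counter)
abbrev Contractors := Puh → Option Contractor

/-- The state of the blockchain: a pool of operations, a map of managers,
a map of contractors, and the current time. -/
structure Blockchain where
  pool : Pool
  mgrs : Managers
  ctrs : Contractors
  time : Time

/-- `updCount M puk b` sets the flag of the counter of the account `puk`. -/
def updCount (M : Managers) (puk : Puk) (b : Bool) : Managers :=
  Function.update M puk ((M puk).map (fun p => (p.1, ⟨p.2.n, b⟩)))

/-- `updSucc M puk nt fee` deducts amount and fee from the balance of `puk`,
increments its counter value and resets the counter flag. -/
def updSucc (M : Managers) (puk : Puk) (nt fee : Tz) : Managers :=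
  Function.update M puk ((M puk).map (fun p => (p.1 - nt - fee, ⟨p.2.n + 1, false⟩)))

/-- `updConstr run C puh nt arg` updates balance and storage of the contract
at `puh` upon an accepted invocation with amount `nt` and argument `arg`;
the new storage is computed by the (unspecified) contract execution
function `run`. -/
def updConstr (run : Code → String → String → String) (C : Contractors)
    (puh : Puh) (nt : Tz) (arg : String) : Contractors :=
  Function.update C puh
    ((C puh).map (fun c => { c with bal := c.bal + nt, storage := run c.code c.storage arg }))

/-- Transitions of the blockchain state: acceptance of a pending transfer,
acceptance of a pending contract invocation, acceptance of a pending
origination (Block-Originate-Accept), and timeout (Block-Timeout).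
`genPuh` is the (unspecified) hash-generation function for contract
addresses and `run` the (unspecified) contract execution function. -/
inductive BStep (genPuh : Code → Time → Puh) (run : Code → String → String → String) :
    Blockchain → Blockchain → Prop where
  | acceptK {P : Pool} {M : Managers} {C : Contractors} {t : Time}
      {oph : Oph} {nt : Tz} {puk dst : Puk} {fee : Tz} {th : Time}
      (hP : P oph = some (.transferK nt puk dst fee, th, .pending))
      (ht : t - th ≤ 60) :
      BStep genPuh run ⟨P, M, C, t⟩
        ⟨Function.update P oph (some (.transferK nt puk dst fee, th, .included t)),
         updSucc M puk nt fee, C, t + 1⟩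
  | acceptH {P : Pool} {M : Managers} {C : Contractors} {t : Time}
      {oph : Oph} {nt : Tz} {puk : Puk} {dst : Puh} {arg : String} {fee : Tz} {th : Time}
      (hP : P oph = some (.transferH nt puk dst arg fee, th, .pending))
      (ht : t - th ≤ 60) :
      BStep genPuh run ⟨P, M, C, t⟩
        ⟨Function.update P oph (some (.transferH nt puk dst arg fee, th, .included t)),
         updSucc M puk nt fee, updConstr run C dst nt arg, t + 1⟩
  | acceptO {P : Pool} {M : Managers} {C : Contractors} {t : Time}
      {oph : Oph} {nt : Tz} {puk : Puk} {code : Code} {init : String} {fee : Tz} {th : Time}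
      (hP : P oph = some (.originate nt puk code init fee, th, .pending))
      (ht : t - th ≤ 60)
      (hfresh : C (genPuh code t) = none) :
      BStep genPuh run ⟨P, M, C, t⟩
        ⟨Function.update P oph (some (.originate nt puk code init fee, th, .included t)),
         updSucc M puk nt fee,
         Function.update C (genPuh code t) (some ⟨code, t, nt, init⟩), t + 1⟩
  | timeout {P : Pool} {M : Managers} {C : Contractors} {t : Time}
      {oph : Oph} {op : Op} {th : Time}
      (hP : P oph = some (op, th, .pending))
      (ht : 60 < t - th) :
      BStep genPuh run ⟨P, M, C, t⟩
        ⟨Function.update P oph (some (op, th, .timeout)),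
         updCount M op.sender false, C, t⟩

/-! ## Types and blockchain well-typedness -/

/-- Types of the surface language, matching Michelson built-in types plus
domain-specific types. `Ty.none` is the irrelevant type `⊤̸`. -/
inductive Ty where
  | puh | puk | addr
  | contract (p s : Ty)
  | code (p s : Ty)
  | oph (p s : Ty)
  | status | exc | tz | none | int | unit | bool | str
  | fn (a b : Ty)
  | pair (a b : Ty)
  | list (a : Ty)
  | sum (a b : Ty)
  | option (a : Ty)
  deriving DecidableEq

/-- The subtype relation generated by the three axioms. -/
inductive SubTy : Ty → Ty → Prop where
  | puhAddr : SubTy .puh .addr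
  | pukAddr : SubTy .puk .addr
  | contractPuh {p s : Ty} : SubTy (.contract p s) .puh

/-- A contract-type environment `Δ` maps public hashes to types. -/
abbrev TyEnv := Puh → Option Ty

/-- `Δ ⊢ B`: the blockchain state `B` is well-typed under `Δ`; the domain of
`Δ` equals the domain of the contractor map, every hash is mapped to a pair
type `Ty.pair tp ts`, the stored code has that type (judgment `codeTy`), and
the stored value parses as a value of the storage type (judgment `valTy`). -/
def BlockchainTyped (codeTy : Code → Ty → Prop) (valTy : String → Ty → Prop)
    (Δ : TyEnv) (B : Blockchain) : Prop :=
  (∀ puh : Puh, (Δ puh).isSome ↔ (B.ctrs puh).isSome) ∧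
  ∀ (puh : Puh) (ty : Ty), Δ puh = some ty →
    ∃ (tp ts : Ty) (c : Contractor), ty = Ty.pair tp ts ∧ B.ctrs puh = some c ∧
      codeTy c.code (Ty.pair tp ts) ∧ valTy c.storage ts

/-! ## Expressions, values, evaluation contexts, reduction, typing -/

/-- Exceptional values. -/
inductive Err where
  | prg | bal | count | fee | puk | puh | arg | init
  deriving DecidableEq

/-- Constants of the expression language. -/
inductive Const where
  | int (i : ℤ)
  | oph (h : Oph)
  | puh (h : Puh)
  | puk (k : Puk)
  | code (c : Code)
  | tz (n : Tz)
  | unit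
  | bool (b : Bool)
  | str (s : String)
  deriving DecidableEq

/-- Query operators. -/
inductive QOp where
  | balance | statusQ | storage | contract
  deriving DecidableEq

/-- Patterns. -/
inductive Pattern where
  | var
  | pair (p q : Pattern)
  | nil
  | cons (p q : Pattern)
  | left (p : Pattern)
  | right (p : Pattern)
  | some (p : Pattern)
  | none
  | true
  | false
  | status (s : Status)
  | err (e : Err)
  deriving DecidableEq

/-- Number of variables bound by a pattern. -/
def Pattern.numVars : Pattern → ℕ
  | .var => 1
  | .pair p q => p.numVars + q.numVars
  | .nil => 0
  | .cons p q => p.numVars + q.numVars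
  | .left p => p.numVars
  | .right p => p.numVars
  | .some p => p.numVars
  | .none => 0
  | .true => 0
  | .false => 0
  | .status _ => 0
  | .err _ => 0

mutual
/-- Expressions: a call-by-value lambda calculus (de Bruijn indices) with
pairs, sums, lists, options, pattern matching, exceptions, casts, and
blockchain operations. -/
inductive Expr where
  | const (c : Const)
  | status (s : Status)
  | err (e : Err)
  | var (n : ℕ)
  | lam (b : Expr)
  | app (f a : Expr)
  | plus (a b : Expr)
  | eq (a b : Expr)
  | and (a b : Expr)
  | or (a b : Expr)
  | not (a : Expr)
  | pair (a b : Expr)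
  | nil
  | cons (a b : Expr)
  | left (a : Expr)
  | right (a : Expr)
  | some (a : Expr)
  | none
  | match_ (s : Expr) (bs : Branches)
  | raise (a : Expr)
  | tryE (a h : Expr)
  | cast (a : Expr) (t u : Ty)
  | transfer (nt puk dst arg fee : Expr)
  | originate (nt puk code init fee : Expr)
  | query (q : QOp) (a : Expr)
/-- Lists of match branches. -/
inductive Branches where
  | nil
  | cons (p : Pattern) (e : Expr) (bs : Branches)
end

mutual
/-- Substitution of a closed expression `v` for de Bruijn index `k`. -/
def Expr.subst : Expr → ℕ → Expr → Expr
  | .const c, _, _ => .const c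
  | .status s, _, _ => .status s
  | .err e, _, _ => .err e
  | .var n, k, v => if n = k then v else if k < n then .var (n - 1) else .var n
  | .lam b, k, v => .lam (Expr.subst b (k + 1) v)
  | .app f a, k, v => .app (Expr.subst f k v) (Expr.subst a k v)
  | .plus a b, k, v => .plus (Expr.subst a k v) (Expr.subst b k v)
  | .eq a b, k, v => .eq (Expr.subst a k v) (Expr.subst b k v)
  | .and a b, k, v => .and (Expr.subst a k v) (Expr.subst b k v)
  | .or a b, k, v => .or (Expr.subst a k v) (Expr.subst b k v)
  | .not a, k, v => .not (Expr.subst a k v)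
  | .pair a b, k, v => .pair (Expr.subst a k v) (Expr.subst b k v)
  | .nil, _, _ => .nil
  | .cons a b, k, v => .cons (Expr.subst a k v) (Expr.subst b k v)
  | .left a, k, v => .left (Expr.subst a k v)
  | .right a, k, v => .right (Expr.subst a k v)
  | .some a, k, v => .some (Expr.subst a k v)
  | .none, _, _ => .none
  | .match_ s bs, k, v => .match_ (Expr.subst s k v) (Branches.subst bs k v)
  | .raise a, k, v => .raise (Expr.subst a k v)
  | .tryE a h, k, v => .tryE (Expr.subst a k v) (Expr.subst h k v)
  | .cast a t u, k, v => .cast (Expr.subst a k v) t u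
  | .transfer a b c d e, k, v =>
      .transfer (Expr.subst a k v) (Expr.subst b k v) (Expr.subst c k v)
        (Expr.subst d k v) (Expr.subst e k v)
  | .originate a b c d e, k, v =>
      .originate (Expr.subst a k v) (Expr.subst b k v) (Expr.subst c k v)
        (Expr.subst d k v) (Expr.subst e k v)
  | .query q a, k, v => .query q (Expr.subst a k v)
/-- Substitution in branches (shifting below the pattern-bound variables). -/
def Branches.subst : Branches → ℕ → Expr → Branches
  | .nil, _, _ => .nil
  | .cons p e bs, k, v => .cons p (Expr.subst e (k + p.numVars) v) (Branches.subst bs k v)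
end

/-- Simultaneous substitution of a list of closed values for indices 0,1,…. -/
def Expr.substList (e : Expr) (σ : List Expr) : Expr :=
  σ.foldl (fun e v => Expr.subst e 0 v) e

mutual
/-- All constants occurring in an expression. -/
def Expr.consts : Expr → List Const
  | .const c => [c]
  | .status _ => []
  | .err _ => []
  | .var _ => []
  | .lam b => Expr.consts b
  | .app f a => Expr.consts f ++ Expr.consts a
  | .plus a b => Expr.consts a ++ Expr.consts b
  | .eq a b => Expr.consts a ++ Expr.consts b
  | .and a b => Expr.consts a ++ Expr.consts b
  | .or a b => Expr.consts a ++ Expr.consts b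
  | .not a => Expr.consts a
  | .pair a b => Expr.consts a ++ Expr.consts b
  | .nil => []
  | .cons a b => Expr.consts a ++ Expr.consts b
  | .left a => Expr.consts a
  | .right a => Expr.consts a
  | .some a => Expr.consts a
  | .none => []
  | .match_ s bs => Expr.consts s ++ Branches.consts bs
  | .raise a => Expr.consts a
  | .tryE a h => Expr.consts a ++ Expr.consts h
  | .cast a _ _ => Expr.consts a
  | .transfer a b c d e =>
      Expr.consts a ++ Expr.consts b ++ Expr.consts c ++ Expr.consts d ++ Expr.consts e
  | .originate a b c d e =>
      Expr.consts a ++ Expr.consts b ++ Expr.consts c ++ Expr.consts d ++ Expr.consts e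
  | .query _ a => Expr.consts a
def Branches.consts : Branches → List Const
  | .nil => []
  | .cons _ e bs => Expr.consts e ++ Branches.consts bs
end

/-- Values of the calculus. -/
inductive IsValue : Expr → Prop where
  | const (c : Const) : IsValue (.const c)
  | status (s : Status) : IsValue (.status s)
  | err (e : Err) : IsValue (.err e)
  | lam (b : Expr) : IsValue (.lam b)
  | pair {a b : Expr} : IsValue a → IsValue b → IsValue (.pair a b)
  | nil : IsValue .nil
  | cons {a b : Expr} : IsValue a → IsValue b → IsValue (.cons a b)
  | left {a : Expr} : IsValue a → IsValue (.left a)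
  | right {a : Expr} : IsValue a → IsValue (.right a)
  | some {a : Expr} : IsValue a → IsValue (.some a)
  | none : IsValue .none

/-- Evaluation contexts (left-to-right, call-by-value). -/
inductive ECtx where
  | hole
  | appL (E : ECtx) (e : Expr)
  | appR (v : Expr) (hv : IsValue v) (E : ECtx)
  | plusL (E : ECtx) (e : Expr)
  | plusR (v : Expr) (hv : IsValue v) (E : ECtx)
  | eqL (E : ECtx) (e : Expr)
  | eqR (v : Expr) (hv : IsValue v) (E : ECtx)
  | andL (E : ECtx) (e : Expr)
  | andR (v : Expr) (hv : IsValue v) (E : ECtx)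
  | orL (E : ECtx) (e : Expr)
  | orR (v : Expr) (hv : IsValue v) (E : ECtx)
  | notC (E : ECtx)
  | pairL (E : ECtx) (e : Expr)
  | pairR (v : Expr) (hv : IsValue v) (E : ECtx)
  | consL (E : ECtx) (e : Expr)
  | consR (v : Expr) (hv : IsValue v) (E : ECtx)
  | leftC (E : ECtx)
  | rightC (E : ECtx)
  | someC (E : ECtx)
  | matchC (E : ECtx) (bs : Branches)
  | raiseC (E : ECtx)
  | tryC (E : ECtx) (h : Expr)
  | castC (E : ECtx) (t u : Ty)
  | transfer1 (E : ECtx) (e2 e3 e4 e5 : Expr)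
  | transfer2 (v1 : Expr) (h1 : IsValue v1) (E : ECtx) (e3 e4 e5 : Expr)
  | transfer3 (v1 v2 : Expr) (h1 : IsValue v1) (h2 : IsValue v2) (E : ECtx) (e4 e5 : Expr)
  | transfer4 (v1 v2 v3 : Expr) (h1 : IsValue v1) (h2 : IsValue v2) (h3 : IsValue v3)
      (E : ECtx) (e5 : Expr)
  | transfer5 (v1 v2 v3 v4 : Expr) (h1 : IsValue v1) (h2 : IsValue v2) (h3 : IsValue v3)
      (h4 : IsValue v4) (E : ECtx)
  | originate1 (E : ECtx) (e2 e3 e4 e5 : Expr)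
  | originate2 (v1 : Expr) (h1 : IsValue v1) (E : ECtx) (e3 e4 e5 : Expr)
  | originate3 (v1 v2 : Expr) (h1 : IsValue v1) (h2 : IsValue v2) (E : ECtx) (e4 e5 : Expr)
  | originate4 (v1 v2 v3 : Expr) (h1 : IsValue v1) (h2 : IsValue v2) (h3 : IsValue v3)
      (E : ECtx) (e5 : Expr)
  | originate5 (v1 v2 v3 v4 : Expr) (h1 : IsValue v1) (h2 : IsValue v2) (h3 : IsValue v3)
      (h4 : IsValue v4) (E : ECtx)
  | queryC (q : QOp) (E : ECtx)

/-- Filling the hole of an evaluation context. -/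
def ECtx.fill : ECtx → Expr → Expr
  | .hole, e => e
  | .appL E e2, e => .app (E.fill e) e2
  | .appR v _ E, e => .app v (E.fill e)
  | .plusL E e2, e => .plus (E.fill e) e2
  | .plusR v _ E, e => .plus v (E.fill e)
  | .eqL E e2, e => .eq (E.fill e) e2
  | .eqR v _ E, e => .eq v (E.fill e)
  | .andL E e2, e => .and (E.fill e) e2
  | .andR v _ E, e => .and v (E.fill e)
  | .orL E e2, e => .or (E.fill e) e2
  | .orR v _ E, e => .or v (E.fill e)
  | .notC E, e => .not (E.fill e)
  | .pairL E e2, e => .pair (E.fill e) e2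
  | .pairR v _ E, e => .pair v (E.fill e)
  | .consL E e2, e => .cons (E.fill e) e2
  | .consR v _ E, e => .cons v (E.fill e)
  | .leftC E, e => .left (E.fill e)
  | .rightC E, e => .right (E.fill e)
  | .someC E, e => .some (E.fill e)
  | .matchC E bs, e => .match_ (E.fill e) bs
  | .raiseC E, e => .raise (E.fill e)
  | .tryC E h, e => .tryE (E.fill e) h
  | .castC E t u, e => .cast (E.fill e) t u
  | .transfer1 E e2 e3 e4 e5, e => .transfer (E.fill e) e2 e3 e4 e5
  | .transfer2 v1 _ E e3 e4 e5, e => .transfer v1 (E.fill e) e3 e4 e5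
  | .transfer3 v1 v2 _ _ E e4 e5, e => .transfer v1 v2 (E.fill e) e4 e5
  | .transfer4 v1 v2 v3 _ _ _ E e5, e => .transfer v1 v2 v3 (E.fill e) e5
  | .transfer5 v1 v2 v3 v4 _ _ _ _ E, e => .transfer v1 v2 v3 v4 (E.fill e)
  | .originate1 E e2 e3 e4 e5, e => .originate (E.fill e) e2 e3 e4 e5
  | .originate2 v1 _ E e3 e4 e5, e => .originate v1 (E.fill e) e3 e4 e5
  | .originate3 v1 v2 _ _ E e4 e5, e => .originate v1 v2 (E.fill e) e4 e5
  | .originate4 v1 v2 v3 _ _ _ E e5, e => .originate v1 v2 v3 (E.fill e) e5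
  | .originate5 v1 v2 v3 v4 _ _ _ _ E, e => .originate v1 v2 v3 v4 (E.fill e)
  | .queryC q E, e => .query q (E.fill e)

/-- A context contains no `try` frame. -/
def ECtx.noTry : ECtx → Prop
  | .hole => True
  | .tryC _ _ => False
  | .appL E _ | .appR _ _ E | .plusL E _ | .plusR _ _ E
  | .eqL E _ | .eqR _ _ E | .andL E _ | .andR _ _ E
  | .orL E _ | .orR _ _ E | .notC E
  | .pairL E _ | .pairR _ _ E | .consL E _ | .consR _ _ E
  | .leftC E | .rightC E | .someC E | .matchC E _ | .raiseC E
  | .castC E _ _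
  | .transfer1 E _ _ _ _ | .transfer2 _ _ E _ _ _ | .transfer3 _ _ _ _ E _ _
  | .transfer4 _ _ _ _ _ _ E _ | .transfer5 _ _ _ _ _ _ _ _ E
  | .originate1 E _ _ _ _ | .originate2 _ _ E _ _ _ | .originate3 _ _ _ _ E _ _
  | .originate4 _ _ _ _ _ _ E _ | .originate5 _ _ _ _ _ _ _ _ E
  | .queryC _ E => E.noTry

/-- Pattern matching a value, producing the list of matched subvalues. -/
inductive Matches : Pattern → Expr → List Expr → Prop where
  | var {v : Expr} : Matches .var v [v]
  | pair {p q : Pattern} {a b : Expr} {σ₁ σ₂ : List Expr} :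
      Matches p a σ₁ → Matches q b σ₂ → Matches (.pair p q) (.pair a b) (σ₁ ++ σ₂)
  | nil : Matches .nil .nil []
  | cons {p q : Pattern} {a b : Expr} {σ₁ σ₂ : List Expr} :
      Matches p a σ₁ → Matches q b σ₂ → Matches (.cons p q) (.cons a b) (σ₁ ++ σ₂)
  | left {p : Pattern} {a : Expr} {σ : List Expr} :
      Matches p a σ → Matches (.left p) (.left a) σ
  | right {p : Pattern} {a : Expr} {σ : List Expr} :
      Matches p a σ → Matches (.right p) (.right a) σ
  | some {p : Pattern} {a : Expr} {σ : List Expr} :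
      Matches p a σ → Matches (.some p) (.some a) σ
  | none : Matches .none .none []
  | true : Matches .true (.const (.bool Bool.true)) []
  | false : Matches .false (.const (.bool Bool.false)) []
  | status {s : Status} : Matches (.status s) (.status s) []
  | err {e : Err} : Matches (.err e) (.err e) []

/-- Selecting a matching branch. -/
inductive BranchesMatch : Branches → Expr → List Expr → Expr → Prop where
  | here {p : Pattern} {e : Expr} {bs : Branches} {v : Expr} {σ : List Expr} :
      Matches p v σ → BranchesMatch (.cons p e bs) v σ e
  | there {p : Pattern} {e : Expr} {bs : Branches} {v body : Expr} {σ : List Expr} :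
      BranchesMatch bs v σ body → BranchesMatch (.cons p e bs) v σ body

/-- Single-step expression reduction (inside evaluation contexts).
Blockchain operations and downcasts are not reduced by this relation. -/
inductive Red : Expr → Expr → Prop where
  | beta {E : ECtx} {b v : Expr} (hv : IsValue v) :
      Red (E.fill (.app (.lam b) v)) (E.fill (Expr.subst b 0 v))
  | tryVal {E : ECtx} {v h : Expr} (hv : IsValue v) :
      Red (E.fill (.tryE v h)) (E.fill v)
  | tryRaise {E : ECtx} {F : ECtx} {v h : Expr} (hF : F.noTry) (hv : IsValue v) :
      Red (E.fill (.tryE (F.fill (.raise v)) h)) (E.fill (.app h v))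
  | upcast {E : ECtx} {v : Expr} {t u : Ty} (hsub : SubTy t u) (hv : IsValue v) :
      Red (E.fill (.cast v t u)) (E.fill v)
  | plus {E : ECtx} {i j : ℤ} :
      Red (E.fill (.plus (.const (.int i)) (.const (.int j))))
          (E.fill (.const (.int (i + j))))
  | eq {E : ECtx} {c c' : Const} :
      Red (E.fill (.eq (.const c) (.const c')))
          (E.fill (.const (.bool (decide (c = c')))))
  | and {E : ECtx} {b1 b2 : Bool} :
      Red (E.fill (.and (.const (.bool b1)) (.const (.bool b2))))
          (E.fill (.const (.bool (b1 && b2))))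
  | or {E : ECtx} {b1 b2 : Bool} :
      Red (E.fill (.or (.const (.bool b1)) (.const (.bool b2))))
          (E.fill (.const (.bool (b1 || b2))))
  | not {E : ECtx} {b : Bool} :
      Red (E.fill (.not (.const (.bool b)))) (E.fill (.const (.bool (!b))))
  | matchR {E : ECtx} {v : Expr} {bs : Branches} {σ : List Expr} {body : Expr}
      (hv : IsValue v) (hm : BranchesMatch bs v σ body) :
      Red (E.fill (.match_ v bs)) (E.fill (Expr.substList body σ))

/-- Typing of patterns: `PatTy p t Δ` says pattern `p` matches values of
type `t` and binds variables of types `Δ`. -/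
inductive PatTy : Pattern → Ty → List Ty → Prop where
  | var {t : Ty} : PatTy .var t [t]
  | pair {p q : Pattern} {a b : Ty} {Δ₁ Δ₂ : List Ty} :
      PatTy p a Δ₁ → PatTy q b Δ₂ → PatTy (.pair p q) (.pair a b) (Δ₁ ++ Δ₂)
  | nil {t : Ty} : PatTy .nil (.list t) []
  | cons {p q : Pattern} {t : Ty} {Δ₁ Δ₂ : List Ty} :
      PatTy p t Δ₁ → PatTy q (.list t) Δ₂ → PatTy (.cons p q) (.list t) (Δ₁ ++ Δ₂)
  | left {p : Pattern} {a b : Ty} {Δ : List Ty} :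
      PatTy p a Δ → PatTy (.left p) (.sum a b) Δ
  | right {p : Pattern} {a b : Ty} {Δ : List Ty} :
      PatTy p b Δ → PatTy (.right p) (.sum a b) Δ
  | someP {p : Pattern} {a : Ty} {Δ : List Ty} :
      PatTy p a Δ → PatTy (.some p) (.option a) Δ
  | noneP {t : Ty} : PatTy .none (.option t) []
  | trueP : PatTy .true .bool []
  | falseP : PatTy .false .bool []
  | statusP {s : Status} : PatTy (.status s) .status []
  | errP {e : Err} : PatTy (.err e) .exc []

mutual
/-- The typing judgment for expressions, relative to an (unspecified) typing
judgment `codeTy` for contract code, an (unspecified) judgment `valTy` for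
serialized values, the accounts `A` of the local node and the current
blockchain state `B`. -/
inductive HasTy (codeTy : Code → Ty → Prop) (valTy : String → Ty → Prop)
    (A : Multiset (Pak × Puk)) (B : Blockchain) : List Ty → Expr → Ty → Prop where
  | intC {Γ : List Ty} {i : ℤ} : HasTy codeTy valTy A B Γ (.const (.int i)) .int
  | tzC {Γ : List Ty} {n : Tz} : HasTy codeTy valTy A B Γ (.const (.tz n)) .tz
  | strC {Γ : List Ty} {s : String} : HasTy codeTy valTy A B Γ (.const (.str s)) .str
  | unitC {Γ : List Ty} : HasTy codeTy valTy A B Γ (.const .unit) .unit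
  | boolC {Γ : List Ty} {b : Bool} : HasTy codeTy valTy A B Γ (.const (.bool b)) .bool
  | puhC {Γ : List Ty} {h : Puh} (hc : (B.ctrs h).isSome) :
      HasTy codeTy valTy A B Γ (.const (.puh h)) .puh
  | pukC {Γ : List Ty} {k : Puk} {pak : Pak} (ha : (pak, k) ∈ A) :
      HasTy codeTy valTy A B Γ (.const (.puk k)) .puk
  | puhAddrC {Γ : List Ty} {h : Puh} : HasTy codeTy valTy A B Γ (.const (.puh h)) .addr
  | pukAddrC {Γ : List Ty} {k : Puk} : HasTy codeTy valTy A B Γ (.const (.puk k)) .addr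
  | contractC {Γ : List Ty} {h : Puh} {c : Contractor} {tp ts : Ty}
      (hc : B.ctrs h = some c) (hcode : codeTy c.code (.pair tp ts))
      (hst : valTy c.storage ts) :
      HasTy codeTy valTy A B Γ (.const (.puh h)) (.contract tp ts)
  | codeC {Γ : List Ty} {c : Code} {tp ts : Ty} (hcode : codeTy c (.pair tp ts)) :
      HasTy codeTy valTy A B Γ (.const (.code c)) (.code tp ts)
  | ophKC {Γ : List Ty} {h : Oph} {nt : Tz} {puk dst : Puk} {fee : Tz}
      {th : Time} {s : Status}
      (hp : B.pool h = some (.transferK nt puk dst fee, th, s)) :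
      HasTy codeTy valTy A B Γ (.const (.oph h)) (.oph Ty.none Ty.none)
  | ophHC {Γ : List Ty} {h : Oph} {nt : Tz} {puk : Puk} {dst : Puh} {arg : String}
      {fee : Tz} {th : Time} {s : Status}
      (hp : B.pool h = some (.transferH nt puk dst arg fee, th, s)) :
      HasTy codeTy valTy A B Γ (.const (.oph h)) (.oph Ty.none Ty.none)
  | ophOC {Γ : List Ty} {h : Oph} {nt : Tz} {puk : Puk} {c : Code} {init : String}
      {fee : Tz} {th : Time} {s : Status} {tp ts : Ty}
      (hp : B.pool h = some (.originate nt puk c init fee, th, s))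
      (hcode : codeTy c (.pair tp ts)) (hTp : tp ≠ Ty.none) (hTs : ts ≠ Ty.none) :
      HasTy codeTy valTy A B Γ (.const (.oph h)) (.oph tp ts)
  | statusC {Γ : List Ty} {s : Status} : HasTy codeTy valTy A B Γ (.status s) .status
  | errC {Γ : List Ty} {e : Err} : HasTy codeTy valTy A B Γ (.err e) .exc
  | varC {Γ : List Ty} {n : ℕ} {t : Ty} (h : Γ[n]? = some t) :
      HasTy codeTy valTy A B Γ (.var n) t
  | lamC {Γ : List Ty} {b : Expr} {t' t : Ty}
      (h : HasTy codeTy valTy A B (t' :: Γ) b t) :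
      HasTy codeTy valTy A B Γ (.lam b) (.fn t' t)
  | appC {Γ : List Ty} {f a : Expr} {t' t : Ty}
      (hf : HasTy codeTy valTy A B Γ f (.fn t' t))
      (ha : HasTy codeTy valTy A B Γ a t') :
      HasTy codeTy valTy A B Γ (.app f a) t
  | plusC {Γ : List Ty} {a b : Expr}
      (ha : HasTy codeTy valTy A B Γ a .int) (hb : HasTy codeTy valTy A B Γ b .int) :
      HasTy codeTy valTy A B Γ (.plus a b) .int
  | eqC {Γ : List Ty} {a b : Expr} {t : Ty}
      (ha : HasTy codeTy valTy A B Γ a t) (hb : HasTy codeTy valTy A B Γ b t) :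
      HasTy codeTy valTy A B Γ (.eq a b) .bool
  | andC {Γ : List Ty} {a b : Expr}
      (ha : HasTy codeTy valTy A B Γ a .bool) (hb : HasTy codeTy valTy A B Γ b .bool) :
      HasTy codeTy valTy A B Γ (.and a b) .bool
  | orC {Γ : List Ty} {a b : Expr}
      (ha : HasTy codeTy valTy A B Γ a .bool) (hb : HasTy codeTy valTy A B Γ b .bool) :
      HasTy codeTy valTy A B Γ (.or a b) .bool
  | notC {Γ : List Ty} {a : Expr} (ha : HasTy codeTy valTy A B Γ a .bool) :
      HasTy codeTy valTy A B Γ (.not a) .bool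
  | pairC {Γ : List Ty} {a b : Expr} {t u : Ty}
      (ha : HasTy codeTy valTy A B Γ a t) (hb : HasTy codeTy valTy A B Γ b u) :
      HasTy codeTy valTy A B Γ (.pair a b) (.pair t u)
  | nilC {Γ : List Ty} {t : Ty} : HasTy codeTy valTy A B Γ .nil (.list t)
  | consC {Γ : List Ty} {a b : Expr} {t : Ty}
      (ha : HasTy codeTy valTy A B Γ a t) (hb : HasTy codeTy valTy A B Γ b (.list t)) :
      HasTy codeTy valTy A B Γ (.cons a b) (.list t)
  | leftC {Γ : List Ty} {a : Expr} {t u : Ty} (ha : HasTy codeTy valTy A B Γ a t) :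
      HasTy codeTy valTy A B Γ (.left a) (.sum t u)
  | rightC {Γ : List Ty} {a : Expr} {t u : Ty} (ha : HasTy codeTy valTy A B Γ a u) :
      HasTy codeTy valTy A B Γ (.right a) (.sum t u)
  | someC {Γ : List Ty} {a : Expr} {t : Ty} (ha : HasTy codeTy valTy A B Γ a t) :
      HasTy codeTy valTy A B Γ (.some a) (.option t)
  | noneC {Γ : List Ty} {t : Ty} : HasTy codeTy valTy A B Γ .none (.option t)
  | matchC {Γ : List Ty} {s : Expr} {bs : Branches} {t u : Ty}
      (hs : HasTy codeTy valTy A B Γ s t) (hbs : BranchesTy codeTy valTy A B Γ t bs u) :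
      HasTy codeTy valTy A B Γ (.match_ s bs) u
  | raiseC {Γ : List Ty} {a : Expr} {t : Ty} (ha : HasTy codeTy valTy A B Γ a .exc) :
      HasTy codeTy valTy A B Γ (.raise a) t
  | tryC {Γ : List Ty} {a h : Expr} {t : Ty}
      (ha : HasTy codeTy valTy A B Γ a t) (hh : HasTy codeTy valTy A B Γ h (.fn .exc t)) :
      HasTy codeTy valTy A B Γ (.tryE a h) t
  | castC {Γ : List Ty} {a : Expr} {t u : Ty}
      (ha : HasTy codeTy valTy A B Γ a t) (hsub : SubTy t u ∨ SubTy u t) :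
      HasTy codeTy valTy A B Γ (.cast a t u) u
  | transferKT {Γ : List Ty} {e1 e2 e3 e4 e5 : Expr}
      (h1 : HasTy codeTy valTy A B Γ e1 .tz) (h2 : HasTy codeTy valTy A B Γ e2 .puk)
      (h3 : HasTy codeTy valTy A B Γ e3 .puk) (h4 : HasTy codeTy valTy A B Γ e4 .unit)
      (h5 : HasTy codeTy valTy A B Γ e5 .tz) :
      HasTy codeTy valTy A B Γ (.transfer e1 e2 e3 e4 e5) (.oph Ty.none Ty.none)
  | transferHT {Γ : List Ty} {e1 e2 e3 e4 e5 : Expr} {tp ts : Ty}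
      (h1 : HasTy codeTy valTy A B Γ e1 .tz) (h2 : HasTy codeTy valTy A B Γ e2 .puk)
      (h3 : HasTy codeTy valTy A B Γ e3 (.contract tp ts))
      (h4 : HasTy codeTy valTy A B Γ e4 tp)
      (h5 : HasTy codeTy valTy A B Γ e5 .tz) :
      HasTy codeTy valTy A B Γ (.transfer e1 e2 e3 e4 e5) (.oph Ty.none Ty.none)
  | originateT {Γ : List Ty} {e1 e2 e3 e4 e5 : Expr} {tp ts : Ty}
      (h1 : HasTy codeTy valTy A B Γ e1 .tz) (h2 : HasTy codeTy valTy A B Γ e2 .puk)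
      (h3 : HasTy codeTy valTy A B Γ e3 (.code tp ts))
      (h4 : HasTy codeTy valTy A B Γ e4 ts)
      (h5 : HasTy codeTy valTy A B Γ e5 .tz) :
      HasTy codeTy valTy A B Γ (.originate e1 e2 e3 e4 e5) (.oph tp ts)
  | qBalanceT {Γ : List Ty} {e : Expr} (he : HasTy codeTy valTy A B Γ e .addr) :
      HasTy codeTy valTy A B Γ (.query .balance e) .tz
  | qStatusT {Γ : List Ty} {e : Expr} {t u : Ty}
      (he : HasTy codeTy valTy A B Γ e (.oph t u)) :
      HasTy codeTy valTy A B Γ (.query .statusQ e) .status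
  | qStorageT {Γ : List Ty} {e : Expr} {tp ts : Ty}
      (he : HasTy codeTy valTy A B Γ e (.contract tp ts)) :
      HasTy codeTy valTy A B Γ (.query .storage e) ts
  | qContractT {Γ : List Ty} {e : Expr} {tp ts : Ty}
      (he : HasTy codeTy valTy A B Γ e (.oph tp ts))
      (hTp : tp ≠ Ty.none) (hTs : ts ≠ Ty.none) :
      HasTy codeTy valTy A B Γ (.query .contract e) (.contract tp ts)
/-- Typing of match branches. -/
inductive BranchesTy (codeTy : Code → Ty → Prop) (valTy : String → Ty → Prop)
    (A : Multiset (Pak × Puk)) (B : Blockchain) : List Ty → Ty → Branches → Ty → Prop where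
  | nil {Γ : List Ty} {t u : Ty} : BranchesTy codeTy valTy A B Γ t .nil u
  | cons {Γ Δ : List Ty} {t u : Ty} {p : Pattern} {e : Expr} {bs : Branches}
      (hp : PatTy p t Δ) (he : HasTy codeTy valTy A B (Δ ++ Γ) e u)
      (hbs : BranchesTy codeTy valTy A B Γ t bs u) :
      BranchesTy codeTy valTy A B Γ t (.cons p e bs) u
end

/-! ## Auxiliary lemmas for preservation -/

section PreservationAux

variable {codeTy : Code → Ty → Prop} {valTy : String → Ty → Prop}
  {A : Multiset (Pak × Puk)} {B : Blockchain}

mutual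
theorem HasTy.weaken {Γ Γ' : List Ty} {e : Expr} {t : Ty}
    (h : HasTy codeTy valTy A B Γ e t) : HasTy codeTy valTy A B (Γ ++ Γ') e t :=
  match h with
  | .intC => .intC
  | .tzC => .tzC
  | .strC => .strC
  | .unitC => .unitC
  | .boolC => .boolC
  | .puhC hc => .puhC hc
  | .pukC ha => .pukC ha
  | .puhAddrC => .puhAddrC
  | .pukAddrC => .pukAddrC
  | .contractC hc hcode hst => .contractC hc hcode hst
  | .codeC hcode => .codeC hcode
  | .ophKC hp => .ophKC hp
  | .ophHC hp => .ophHC hp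
  | .ophOC hp hcode hTp hTs => .ophOC hp hcode hTp hTs
  | .statusC => .statusC
  | .errC => .errC
  | .varC hn => .varC (by
      rw [List.getElem?_append_left (List.getElem?_eq_some_iff.mp hn).1]; exact hn)
  | .lamC hb => .lamC hb.weaken
  | .appC hf ha => .appC hf.weaken ha.weaken
  | .plusC ha hb => .plusC ha.weaken hb.weaken
  | .eqC ha hb => .eqC ha.weaken hb.weaken
  | .andC ha hb => .andC ha.weaken hb.weaken
  | .orC ha hb => .orC ha.weaken hb.weaken
  | .notC ha => .notC ha.weaken
  | .pairC ha hb => .pairC ha.weaken hb.weaken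
  | .nilC => .nilC
  | .consC ha hb => .consC ha.weaken hb.weaken
  | .leftC ha => .leftC ha.weaken
  | .rightC ha => .rightC ha.weaken
  | .someC ha => .someC ha.weaken
  | .noneC => .noneC
  | .matchC hs hbs => .matchC hs.weaken hbs.weaken
  | .raiseC ha => .raiseC ha.weaken
  | .tryC ha hh => .tryC ha.weaken hh.weaken
  | .castC ha hsub => .castC ha.weaken hsub
  | .transferKT h1 h2 h3 h4 h5 =>
      .transferKT h1.weaken h2.weaken h3.weaken h4.weaken h5.weaken
  | .transferHT h1 h2 h3 h4 h5 =>
      .transferHT h1.weaken h2.weaken h3.weaken h4.weaken h5.weaken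
  | .originateT h1 h2 h3 h4 h5 =>
      .originateT h1.weaken h2.weaken h3.weaken h4.weaken h5.weaken
  | .qBalanceT he => .qBalanceT he.weaken
  | .qStatusT he => .qStatusT he.weaken
  | .qStorageT he => .qStorageT he.weaken
  | .qContractT he hTp hTs => .qContractT he.weaken hTp hTs

theorem BranchesTy.weaken {Γ Γ' : List Ty} {t : Ty} {bs : Branches} {u : Ty}
    (h : BranchesTy codeTy valTy A B Γ t bs u) :
    BranchesTy codeTy valTy A B (Γ ++ Γ') t bs u :=
  match h with
  | .nil => .nil
  | .cons hp he hbs =>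
      .cons hp (by have := he.weaken (Γ' := Γ'); rwa [List.append_assoc] at this) hbs.weaken
end

theorem HasTy.anyCtx {e : Expr} {t : Ty}
    (h : HasTy codeTy valTy A B [] e t) (Γ : List Ty) : HasTy codeTy valTy A B Γ e t :=
  h.weaken (Γ' := Γ)

theorem PatTy.numVars_eq {p : Pattern} {t : Ty} {Δ : List Ty} (h : PatTy p t Δ) :
    p.numVars = Δ.length := by
  induction h <;> simp_all [Pattern.numVars]

mutual
theorem HasTy.substTy {Γ : List Ty} {e : Expr} {t : Ty}
    (h : HasTy codeTy valTy A B Γ e t) :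
    ∀ (Γ₁ Γ₂ : List Ty) (u : Ty) (v : Expr), Γ = Γ₁ ++ u :: Γ₂ →
      (∀ Γ', HasTy codeTy valTy A B Γ' v u) →
      HasTy codeTy valTy A B (Γ₁ ++ Γ₂) (Expr.subst e Γ₁.length v) t :=
  match h with
  | .intC => fun _ _ _ _ _ _ => .intC
  | .tzC => fun _ _ _ _ _ _ => .tzC
  | .strC => fun _ _ _ _ _ _ => .strC
  | .unitC => fun _ _ _ _ _ _ => .unitC
  | .boolC => fun _ _ _ _ _ _ => .boolC
  | .puhC hc => fun _ _ _ _ _ _ => .puhC hc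
  | .pukC ha => fun _ _ _ _ _ _ => .pukC ha
  | .puhAddrC => fun _ _ _ _ _ _ => .puhAddrC
  | .pukAddrC => fun _ _ _ _ _ _ => .pukAddrC
  | .contractC hc hcode hst => fun _ _ _ _ _ _ => .contractC hc hcode hst
  | .codeC hcode => fun _ _ _ _ _ _ => .codeC hcode
  | .ophKC hp => fun _ _ _ _ _ _ => .ophKC hp
  | .ophHC hp => fun _ _ _ _ _ _ => .ophHC hp
  | .ophOC hp hcode hTp hTs => fun _ _ _ _ _ _ => .ophOC hp hcode hTp hTs
  | .statusC => fun _ _ _ _ _ _ => .statusC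
  | .errC => fun _ _ _ _ _ _ => .errC
  | .varC (n := n) hn => fun Γ₁ Γ₂ u v hΓ hv => by
      subst hΓ
      rcases lt_trichotomy n Γ₁.length with h1 | h2 | h3
      · simp only [Expr.subst, if_neg (by omega : ¬ n = Γ₁.length),
          if_neg (by omega : ¬ Γ₁.length < n)]
        refine .varC ?_
        rw [List.getElem?_append_left h1] at hn ⊢
        exact hn
      · subst h2
        simp only [Expr.subst, if_pos rfl]
        rw [List.getElem?_append_right le_rfl, Nat.sub_self] at hn
        simp only [List.getElem?_cons_zero, Option.some.injEq] at hn
        subst hn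
        exact hv _
      · simp only [Expr.subst, if_neg (by omega : ¬ n = Γ₁.length), if_pos h3]
        refine .varC ?_
        rw [List.getElem?_append_right (by omega)] at hn
        have hm : n - Γ₁.length = (n - Γ₁.length - 1) + 1 := by omega
        rw [hm, List.getElem?_cons_succ] at hn
        rw [List.getElem?_append_right (by omega : Γ₁.length ≤ n - 1)]
        have : n - 1 - Γ₁.length = n - Γ₁.length - 1 := by omega
        rw [this]; exact hn
  | .lamC (t' := t') hb => fun Γ₁ Γ₂ u v hΓ hv => by
      subst hΓ
      exact .lamC (hb.substTy (t' :: Γ₁) Γ₂ u v rfl hv)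
  | .appC hf ha => fun Γ₁ Γ₂ u v hΓ hv =>
      .appC (hf.substTy Γ₁ Γ₂ u v hΓ hv) (ha.substTy Γ₁ Γ₂ u v hΓ hv)
  | .plusC ha hb => fun Γ₁ Γ₂ u v hΓ hv =>
      .plusC (ha.substTy Γ₁ Γ₂ u v hΓ hv) (hb.substTy Γ₁ Γ₂ u v hΓ hv)
  | .eqC ha hb => fun Γ₁ Γ₂ u v hΓ hv =>
      .eqC (ha.substTy Γ₁ Γ₂ u v hΓ hv) (hb.substTy Γ₁ Γ₂ u v hΓ hv)
  | .andC ha hb => fun Γ₁ Γ₂ u v hΓ hv =>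
      .andC (ha.substTy Γ₁ Γ₂ u v hΓ hv) (hb.substTy Γ₁ Γ₂ u v hΓ hv)
  | .orC ha hb => fun Γ₁ Γ₂ u v hΓ hv =>
      .orC (ha.substTy Γ₁ Γ₂ u v hΓ hv) (hb.substTy Γ₁ Γ₂ u v hΓ hv)
  | .notC ha => fun Γ₁ Γ₂ u v hΓ hv => .notC (ha.substTy Γ₁ Γ₂ u v hΓ hv)
  | .pairC ha hb => fun Γ₁ Γ₂ u v hΓ hv =>
      .pairC (ha.substTy Γ₁ Γ₂ u v hΓ hv) (hb.substTy Γ₁ Γ₂ u v hΓ hv)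
  | .nilC => fun _ _ _ _ _ _ => .nilC
  | .consC ha hb => fun Γ₁ Γ₂ u v hΓ hv =>
      .consC (ha.substTy Γ₁ Γ₂ u v hΓ hv) (hb.substTy Γ₁ Γ₂ u v hΓ hv)
  | .leftC ha => fun Γ₁ Γ₂ u v hΓ hv => .leftC (ha.substTy Γ₁ Γ₂ u v hΓ hv)
  | .rightC ha => fun Γ₁ Γ₂ u v hΓ hv => .rightC (ha.substTy Γ₁ Γ₂ u v hΓ hv)
  | .someC ha => fun Γ₁ Γ₂ u v hΓ hv => .someC (ha.substTy Γ₁ Γ₂ u v hΓ hv)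
  | .noneC => fun _ _ _ _ _ _ => .noneC
  | .matchC hs hbs => fun Γ₁ Γ₂ u v hΓ hv =>
      .matchC (hs.substTy Γ₁ Γ₂ u v hΓ hv) (hbs.substTy Γ₁ Γ₂ u v hΓ hv)
  | .raiseC ha => fun Γ₁ Γ₂ u v hΓ hv => .raiseC (ha.substTy Γ₁ Γ₂ u v hΓ hv)
  | .tryC ha hh => fun Γ₁ Γ₂ u v hΓ hv =>
      .tryC (ha.substTy Γ₁ Γ₂ u v hΓ hv) (hh.substTy Γ₁ Γ₂ u v hΓ hv)
  | .castC ha hsub => fun Γ₁ Γ₂ u v hΓ hv =>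
      .castC (ha.substTy Γ₁ Γ₂ u v hΓ hv) hsub
  | .transferKT h1 h2 h3 h4 h5 => fun Γ₁ Γ₂ u v hΓ hv =>
      .transferKT (h1.substTy Γ₁ Γ₂ u v hΓ hv) (h2.substTy Γ₁ Γ₂ u v hΓ hv)
        (h3.substTy Γ₁ Γ₂ u v hΓ hv) (h4.substTy Γ₁ Γ₂ u v hΓ hv) (h5.substTy Γ₁ Γ₂ u v hΓ hv)
  | .transferHT h1 h2 h3 h4 h5 => fun Γ₁ Γ₂ u v hΓ hv =>
      .transferHT (h1.substTy Γ₁ Γ₂ u v hΓ hv) (h2.substTy Γ₁ Γ₂ u v hΓ hv)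
        (h3.substTy Γ₁ Γ₂ u v hΓ hv) (h4.substTy Γ₁ Γ₂ u v hΓ hv) (h5.substTy Γ₁ Γ₂ u v hΓ hv)
  | .originateT h1 h2 h3 h4 h5 => fun Γ₁ Γ₂ u v hΓ hv =>
      .originateT (h1.substTy Γ₁ Γ₂ u v hΓ hv) (h2.substTy Γ₁ Γ₂ u v hΓ hv)
        (h3.substTy Γ₁ Γ₂ u v hΓ hv) (h4.substTy Γ₁ Γ₂ u v hΓ hv) (h5.substTy Γ₁ Γ₂ u v hΓ hv)
  | .qBalanceT he => fun Γ₁ Γ₂ u v hΓ hv => .qBalanceT (he.substTy Γ₁ Γ₂ u v hΓ hv)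
  | .qStatusT he => fun Γ₁ Γ₂ u v hΓ hv => .qStatusT (he.substTy Γ₁ Γ₂ u v hΓ hv)
  | .qStorageT he => fun Γ₁ Γ₂ u v hΓ hv => .qStorageT (he.substTy Γ₁ Γ₂ u v hΓ hv)
  | .qContractT he hTp hTs => fun Γ₁ Γ₂ u v hΓ hv =>
      .qContractT (he.substTy Γ₁ Γ₂ u v hΓ hv) hTp hTs

theorem BranchesTy.substTy {Γ : List Ty} {t : Ty} {bs : Branches} {w : Ty}
    (h : BranchesTy codeTy valTy A B Γ t bs w) :
    ∀ (Γ₁ Γ₂ : List Ty) (u : Ty) (v : Expr), Γ = Γ₁ ++ u :: Γ₂ →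
      (∀ Γ', HasTy codeTy valTy A B Γ' v u) →
      BranchesTy codeTy valTy A B (Γ₁ ++ Γ₂) t (Branches.subst bs Γ₁.length v) w :=
  match h with
  | .nil => fun _ _ _ _ _ _ => .nil
  | .cons (p := p) (Δ := Δ) (e := e) hp he hbs => fun Γ₁ Γ₂ u v hΓ hv => by
      subst hΓ
      simp only [Branches.subst]
      refine .cons hp ?_ (hbs.substTy Γ₁ Γ₂ u v rfl hv)
      have he' : HasTy codeTy valTy A B ((Δ ++ Γ₁) ++ u :: Γ₂) e w := by
        rwa [List.append_assoc]
      have := he'.substTy (Δ ++ Γ₁) Γ₂ u v rfl hv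
      rw [List.append_assoc] at this
      have hlen : (Δ ++ Γ₁).length = Γ₁.length + p.numVars := by
        simp [hp.numVars_eq]; omega
      rwa [hlen] at this
end

theorem Matches.typed {p : Pattern} {v : Expr} {σ : List Expr}
    (hm : Matches p v σ) :
    ∀ {t : Ty} {Δ : List Ty} {Γ : List Ty}, PatTy p t Δ →
      HasTy codeTy valTy A B Γ v t →
      List.Forall₂ (HasTy codeTy valTy A B Γ) σ Δ := by
  induction hm with
  | var => intro t Δ Γ hp hv; cases hp; exact List.Forall₂.cons hv List.Forall₂.nil
  | pair hm1 hm2 ih1 ih2 =>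
      intro t Δ Γ hp hv
      cases hp with | pair hp1 hp2 =>
      cases hv with | pairC ha hb =>
      exact List.rel_append (ih1 hp1 ha) (ih2 hp2 hb)
  | nil => intro t Δ Γ hp hv; cases hp; exact List.Forall₂.nil
  | cons hm1 hm2 ih1 ih2 =>
      intro t Δ Γ hp hv
      cases hp with | cons hp1 hp2 =>
      cases hv with | consC ha hb =>
      exact List.rel_append (ih1 hp1 ha) (ih2 hp2 hb)
  | left hm ih =>
      intro t Δ Γ hp hv
      cases hp with | left hp1 =>
      cases hv with | leftC ha => exact ih hp1 ha
  | right hm ih =>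
      intro t Δ Γ hp hv
      cases hp with | right hp1 =>
      cases hv with | rightC ha => exact ih hp1 ha
  | some hm ih =>
      intro t Δ Γ hp hv
      cases hp with | someP hp1 =>
      cases hv with | someC ha => exact ih hp1 ha
  | none => intro t Δ Γ hp hv; cases hp; exact List.Forall₂.nil
  | true => intro t Δ Γ hp hv; cases hp; exact List.Forall₂.nil
  | false => intro t Δ Γ hp hv; cases hp; exact List.Forall₂.nil
  | status => intro t Δ Γ hp hv; cases hp; exact List.Forall₂.nil
  | err => intro t Δ Γ hp hv; cases hp; exact List.Forall₂.nil

theorem HasTy.substListTy {σ : List Expr} {Δ : List Ty}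
    (hσ : List.Forall₂ (fun v u => ∀ Γ', HasTy codeTy valTy A B Γ' v u) σ Δ) :
    ∀ {Γ : List Ty} {e : Expr} {t : Ty}, HasTy codeTy valTy A B (Δ ++ Γ) e t →
      HasTy codeTy valTy A B Γ (Expr.substList e σ) t := by
  induction hσ with
  | nil => intro Γ e t h; exact h
  | cons hvu _ ih =>
      intro Γ e t h
      show HasTy codeTy valTy A B Γ (Expr.substList (Expr.subst e 0 _) _) t
      exact ih (h.substTy [] _ _ _ rfl hvu)

theorem BranchesMatch.typed {bs : Branches} {v : Expr} {σ : List Expr} {body : Expr}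
    (hm : BranchesMatch bs v σ body) :
    ∀ {t w : Ty}, BranchesTy codeTy valTy A B [] t bs w →
      HasTy codeTy valTy A B [] v t →
      HasTy codeTy valTy A B [] (Expr.substList body σ) w := by
  induction hm with
  | here hmatch =>
      intro t w hbs hv
      cases hbs with | cons hp he _ =>
      refine HasTy.substListTy ?_ he
      exact List.Forall₂.imp (fun _ _ hvu => hvu.anyCtx) (hmatch.typed hp hv)
  | there _ ih =>
      intro t w hbs hv
      cases hbs with | cons _ _ hbs' => exact ih hbs' hv

theorem HasTy.valSub {Γ : List Ty} {v : Expr} {t u : Ty}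
    (hval : IsValue v) (h : HasTy codeTy valTy A B Γ v t) (hs : SubTy t u) :
    HasTy codeTy valTy A B Γ v u := by
  cases hs with
  | puhAddr => cases h <;> first | exact .puhAddrC | cases hval
  | pukAddr => cases h <;> first | exact .pukAddrC | cases hval
  | contractPuh =>
      cases h with
      | contractC hc _ _ => exact .puhC (by rw [hc]; rfl)
      | varC h => cases hval
      | appC hf ha => cases hval
      | matchC hs hbs => cases hval
      | raiseC ha => cases hval
      | tryC ha hh => cases hval
      | castC ha hsub => cases hval
      | qContractT he hTp hTs => cases hval
      | qStorageT he => cases hval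

theorem HasTy.decomp {Γ : List Ty} (E : ECtx) {r : Expr} {t : Ty}
    (h : HasTy codeTy valTy A B Γ (E.fill r) t) :
    ∃ u, HasTy codeTy valTy A B Γ r u ∧
      ∀ r', HasTy codeTy valTy A B Γ r' u → HasTy codeTy valTy A B Γ (E.fill r') t := by
  induction E generalizing t with
  | hole => exact ⟨t, h, fun _ h' => h'⟩
  | appL E e2 ih =>
      cases h with | appC hf ha =>
      obtain ⟨u, hr, hk⟩ := ih hf
      exact ⟨u, hr, fun r' h' => .appC (hk r' h') ha⟩
  | appR v hv E ih =>
      cases h with | appC hf ha =>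
      obtain ⟨u, hr, hk⟩ := ih ha
      exact ⟨u, hr, fun r' h' => .appC hf (hk r' h')⟩
  | plusL E e2 ih =>
      cases h with | plusC ha hb =>
      obtain ⟨u, hr, hk⟩ := ih ha
      exact ⟨u, hr, fun r' h' => .plusC (hk r' h') hb⟩
  | plusR v hv E ih =>
      cases h with | plusC ha hb =>
      obtain ⟨u, hr, hk⟩ := ih hb
      exact ⟨u, hr, fun r' h' => .plusC ha (hk r' h')⟩
  | eqL E e2 ih =>
      cases h with | eqC ha hb =>
      obtain ⟨u, hr, hk⟩ := ih ha
      exact ⟨u, hr, fun r' h' => .eqC (hk r' h') hb⟩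
  | eqR v hv E ih =>
      cases h with | eqC ha hb =>
      obtain ⟨u, hr, hk⟩ := ih hb
      exact ⟨u, hr, fun r' h' => .eqC ha (hk r' h')⟩
  | andL E e2 ih =>
      cases h with | andC ha hb =>
      obtain ⟨u, hr, hk⟩ := ih ha
      exact ⟨u, hr, fun r' h' => .andC (hk r' h') hb⟩
  | andR v hv E ih =>
      cases h with | andC ha hb =>
      obtain ⟨u, hr, hk⟩ := ih hb
      exact ⟨u, hr, fun r' h' => .andC ha (hk r' h')⟩
  | orL E e2 ih =>
      cases h with | orC ha hb =>
      obtain ⟨u, hr, hk⟩ := ih ha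
      exact ⟨u, hr, fun r' h' => .orC (hk r' h') hb⟩
  | orR v hv E ih =>
      cases h with | orC ha hb =>
      obtain ⟨u, hr, hk⟩ := ih hb
      exact ⟨u, hr, fun r' h' => .orC ha (hk r' h')⟩
  | notC E ih =>
      cases h with | notC ha =>
      obtain ⟨u, hr, hk⟩ := ih ha
      exact ⟨u, hr, fun r' h' => .notC (hk r' h')⟩
  | pairL E e2 ih =>
      cases h with | pairC ha hb =>
      obtain ⟨u, hr, hk⟩ := ih ha
      exact ⟨u, hr, fun r' h' => .pairC (hk r' h') hb⟩
  | pairR v hv E ih =>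
      cases h with | pairC ha hb =>
      obtain ⟨u, hr, hk⟩ := ih hb
      exact ⟨u, hr, fun r' h' => .pairC ha (hk r' h')⟩
  | consL E e2 ih =>
      cases h with | consC ha hb =>
      obtain ⟨u, hr, hk⟩ := ih ha
      exact ⟨u, hr, fun r' h' => .consC (hk r' h') hb⟩
  | consR v hv E ih =>
      cases h with | consC ha hb =>
      obtain ⟨u, hr, hk⟩ := ih hb
      exact ⟨u, hr, fun r' h' => .consC ha (hk r' h')⟩
  | leftC E ih =>
      cases h with | leftC ha =>
      obtain ⟨u, hr, hk⟩ := ih ha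
      exact ⟨u, hr, fun r' h' => .leftC (hk r' h')⟩
  | rightC E ih =>
      cases h with | rightC ha =>
      obtain ⟨u, hr, hk⟩ := ih ha
      exact ⟨u, hr, fun r' h' => .rightC (hk r' h')⟩
  | someC E ih =>
      cases h with | someC ha =>
      obtain ⟨u, hr, hk⟩ := ih ha
      exact ⟨u, hr, fun r' h' => .someC (hk r' h')⟩
  | matchC E bs ih =>
      cases h with | matchC hs hbs =>
      obtain ⟨u, hr, hk⟩ := ih hs
      exact ⟨u, hr, fun r' h' => .matchC (hk r' h') hbs⟩
  | raiseC E ih =>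
      cases h with | raiseC ha =>
      obtain ⟨u, hr, hk⟩ := ih ha
      exact ⟨u, hr, fun r' h' => .raiseC (hk r' h')⟩
  | tryC E hEx ih =>
      cases h with | tryC ha hh =>
      obtain ⟨u, hr, hk⟩ := ih ha
      exact ⟨u, hr, fun r' h' => .tryC (hk r' h') hh⟩
  | castC E t' u' ih =>
      cases h with | castC ha hsub =>
      obtain ⟨u, hr, hk⟩ := ih ha
      exact ⟨u, hr, fun r' h' => .castC (hk r' h') hsub⟩
  | transfer1 E e2 e3 e4 e5 ih =>
      cases h with
      | transferKT h1 h2 h3 h4 h5 =>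
          obtain ⟨u, hr, hk⟩ := ih h1
          exact ⟨u, hr, fun r' h' => .transferKT (hk r' h') h2 h3 h4 h5⟩
      | transferHT h1 h2 h3 h4 h5 =>
          obtain ⟨u, hr, hk⟩ := ih h1
          exact ⟨u, hr, fun r' h' => .transferHT (hk r' h') h2 h3 h4 h5⟩
  | transfer2 v1 hv1 E e3 e4 e5 ih =>
      cases h with
      | transferKT h1 h2 h3 h4 h5 =>
          obtain ⟨u, hr, hk⟩ := ih h2
          exact ⟨u, hr, fun r' h' => .transferKT h1 (hk r' h') h3 h4 h5⟩
      | transferHT h1 h2 h3 h4 h5 =>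
          obtain ⟨u, hr, hk⟩ := ih h2
          exact ⟨u, hr, fun r' h' => .transferHT h1 (hk r' h') h3 h4 h5⟩
  | transfer3 v1 v2 hv1 hv2 E e4 e5 ih =>
      cases h with
      | transferKT h1 h2 h3 h4 h5 =>
          obtain ⟨u, hr, hk⟩ := ih h3
          exact ⟨u, hr, fun r' h' => .transferKT h1 h2 (hk r' h') h4 h5⟩
      | transferHT h1 h2 h3 h4 h5 =>
          obtain ⟨u, hr, hk⟩ := ih h3
          exact ⟨u, hr, fun r' h' => .transferHT h1 h2 (hk r' h') h4 h5⟩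
  | transfer4 v1 v2 v3 hv1 hv2 hv3 E e5 ih =>
      cases h with
      | transferKT h1 h2 h3 h4 h5 =>
          obtain ⟨u, hr, hk⟩ := ih h4
          exact ⟨u, hr, fun r' h' => .transferKT h1 h2 h3 (hk r' h') h5⟩
      | transferHT h1 h2 h3 h4 h5 =>
          obtain ⟨u, hr, hk⟩ := ih h4
          exact ⟨u, hr, fun r' h' => .transferHT h1 h2 h3 (hk r' h') h5⟩
  | transfer5 v1 v2 v3 v4 hv1 hv2 hv3 hv4 E ih =>
      cases h with
      | transferKT h1 h2 h3 h4 h5 =>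
          obtain ⟨u, hr, hk⟩ := ih h5
          exact ⟨u, hr, fun r' h' => .transferKT h1 h2 h3 h4 (hk r' h')⟩
      | transferHT h1 h2 h3 h4 h5 =>
          obtain ⟨u, hr, hk⟩ := ih h5
          exact ⟨u, hr, fun r' h' => .transferHT h1 h2 h3 h4 (hk r' h')⟩
  | originate1 E e2 e3 e4 e5 ih =>
      cases h with | originateT h1 h2 h3 h4 h5 =>
      obtain ⟨u, hr, hk⟩ := ih h1
      exact ⟨u, hr, fun r' h' => .originateT (hk r' h') h2 h3 h4 h5⟩
  | originate2 v1 hv1 E e3 e4 e5 ih =>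
      cases h with | originateT h1 h2 h3 h4 h5 =>
      obtain ⟨u, hr, hk⟩ := ih h2
      exact ⟨u, hr, fun r' h' => .originateT h1 (hk r' h') h3 h4 h5⟩
  | originate3 v1 v2 hv1 hv2 E e4 e5 ih =>
      cases h with | originateT h1 h2 h3 h4 h5 =>
      obtain ⟨u, hr, hk⟩ := ih h3
      exact ⟨u, hr, fun r' h' => .originateT h1 h2 (hk r' h') h4 h5⟩
  | originate4 v1 v2 v3 hv1 hv2 hv3 E e5 ih =>
      cases h with | originateT h1 h2 h3 h4 h5 =>
      obtain ⟨u, hr, hk⟩ := ih h4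
      exact ⟨u, hr, fun r' h' => .originateT h1 h2 h3 (hk r' h') h5⟩
  | originate5 v1 v2 v3 v4 hv1 hv2 hv3 hv4 E ih =>
      cases h with | originateT h1 h2 h3 h4 h5 =>
      obtain ⟨u, hr, hk⟩ := ih h5
      exact ⟨u, hr, fun r' h' => .originateT h1 h2 h3 h4 (hk r' h')⟩
  | queryC q E ih =>
      cases h with
      | qBalanceT he =>
          obtain ⟨u, hr, hk⟩ := ih he
          exact ⟨u, hr, fun r' h' => .qBalanceT (hk r' h')⟩
      | qStatusT he =>
          obtain ⟨u, hr, hk⟩ := ih he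
          exact ⟨u, hr, fun r' h' => .qStatusT (hk r' h')⟩
      | qStorageT he =>
          obtain ⟨u, hr, hk⟩ := ih he
          exact ⟨u, hr, fun r' h' => .qStorageT (hk r' h')⟩
      | qContractT he hTp hTs =>
          obtain ⟨u, hr, hk⟩ := ih he
          exact ⟨u, hr, fun r' h' => .qContractT (hk r' h') hTp hTs⟩

end PreservationAux


/-- Type preservation for expression reduction: a single
step of the expression reduction relation preserves the type of a closed
well-typed expression. -/
theorem preservation_expr (codeTy : Code → Ty → Prop) (valTy : String → Ty → Prop)
    {A : Multiset (Pak × Puk)} {B : Blockchain} {e e' : Expr} {t : Ty}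
    (hty : HasTy codeTy valTy A B [] e t) (hred : Red e e') :
    HasTy codeTy valTy A B [] e' t := by
  cases hred with
  | beta hv =>
      obtain ⟨u, hr, hk⟩ := HasTy.decomp _ hty
      cases hr with | appC hf ha =>
      cases hf with | lamC hb =>
      exact hk _ (hb.substTy [] [] _ _ rfl ha.anyCtx)
  | tryVal hv =>
      obtain ⟨u, hr, hk⟩ := HasTy.decomp _ hty
      cases hr with | tryC ha hh =>
      exact hk _ ha
  | tryRaise hF hv =>
      obtain ⟨u, hr, hk⟩ := HasTy.decomp _ hty
      cases hr with | tryC ha hh =>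
      obtain ⟨w, hw, _⟩ := HasTy.decomp _ ha
      cases hw with | raiseC hexc =>
      exact hk _ (.appC hh hexc)
  | upcast hsub hv =>
      obtain ⟨u, hr, hk⟩ := HasTy.decomp _ hty
      cases hr with | castC ha _ =>
      exact hk _ (ha.valSub hv hsub)
  | plus =>
      obtain ⟨u, hr, hk⟩ := HasTy.decomp _ hty
      cases hr; exact hk _ .intC
  | eq =>
      obtain ⟨u, hr, hk⟩ := HasTy.decomp _ hty
      cases hr; exact hk _ .boolC
  | and =>
      obtain ⟨u, hr, hk⟩ := HasTy.decomp _ hty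
      cases hr; exact hk _ .boolC
  | or =>
      obtain ⟨u, hr, hk⟩ := HasTy.decomp _ hty
      cases hr; exact hk _ .boolC
  | not =>
      obtain ⟨u, hr, hk⟩ := HasTy.decomp _ hty
      cases hr; exact hk _ .boolC
  | matchR hv hm =>
      obtain ⟨u, hr, hk⟩ := HasTy.decomp _ hty
      cases hr with | matchC hs hbs =>
      exact hk _ (hm.typed hbs hs)
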